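/- arXiv:2305.19415 — 2 statements merged into one kernel-verified Lean document; each statement's English description precedes it below -/
import Mathlib

section
/- Let X be a δ-net in ℝⁿ isometrically embedded in a complete connected Riemannian manifold M (identifying X with its image). Suppose also that the image of X is a δ̃-net in M. Let p ∈ X, and let γ be a unit-speed geodesic with γ(0) = p that is a limit of minimizing segments from p to two sequences of net points drifting in directions u and v respectively, with u ≠ v unit vectors. Then one derives a contradiction; i.e., the global direction of such a geodesic is unique: γ_{p,u} = γ_{p,v} implies u = v. -/
open Filter Topology

lemma drift_aux {n : ℕ} (q : ℕ → EuclideanSpace ℝ (Fin n)) (w a : EuclideanSpace ℝ (Fin n))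
    (hw : ‖w‖ = 1)
    (h1 : Filter.Tendsto (fun m => ‖q m‖) Filter.atTop Filter.atTop)
    (h2 : Filter.Tendsto (fun m => (‖q m‖⁻¹ • q m : EuclideanSpace ℝ (Fin n)))
      Filter.atTop (nhds w)) :
    Filter.Tendsto (fun m => ‖q m - a‖ - ‖q m‖) Filter.atTop (nhds (-(inner ℝ a w : ℝ))) := by
  have hinv : Tendsto (fun m => ‖q m‖⁻¹) atTop (nhds 0) := tendsto_inv_atTop_zero.comp h1
  have hnum : Tendsto (fun m => ‖a‖^2 * ‖q m‖⁻¹ - 2 * (inner ℝ a (‖q m‖⁻¹ • q m) : ℝ))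
      atTop (nhds (‖a‖^2 * 0 - 2 * (inner ℝ a w : ℝ))) :=
    (tendsto_const_nhds.mul hinv).sub (tendsto_const_nhds.mul (tendsto_const_nhds.inner h2))
  have hsa : Tendsto (fun m => (‖q m‖⁻¹ • a : EuclideanSpace ℝ (Fin n))) atTop
      (nhds ((0:ℝ) • a)) := hinv.smul tendsto_const_nhds
  have hden : Tendsto (fun m => ‖(‖q m‖⁻¹ • q m : EuclideanSpace ℝ (Fin n)) - ‖q m‖⁻¹ • a‖ + 1)
      atTop (nhds (‖w - (0:ℝ) • a‖ + 1)) := ((h2.sub hsa).norm).add tendsto_const_nhds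
  have hden0 : ‖w - (0:ℝ) • a‖ + 1 ≠ 0 := by simp [hw]
  have hlim := hnum.div hden hden0
  have hval : (‖a‖^2 * 0 - 2 * (inner ℝ a w : ℝ)) / (‖w - (0:ℝ) • a‖ + 1)
      = -(inner ℝ a w : ℝ) := by
    rw [zero_smul, sub_zero, hw]; ring
  rw [hval] at hlim
  refine hlim.congr' ?_
  filter_upwards [h1.eventually_gt_atTop 0] with m hr
  have hr' : ‖q m‖ ≠ 0 := ne_of_gt hr
  have hsq : ‖q m - a‖^2 = ‖q m‖^2 - 2 * (inner ℝ (q m) a : ℝ) + ‖a‖^2 :=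
    norm_sub_sq_real _ _
  have hic : (inner ℝ a (q m) : ℝ) = inner ℝ (q m) a := real_inner_comm _ _
  simp only [Pi.div_apply]
  rw [← smul_sub, norm_smul, real_inner_smul_right, Real.norm_eq_abs,
    abs_of_pos (inv_pos.mpr hr), div_eq_iff (by positivity), hic]
  set I := (inner ℝ (q m) a : ℝ) with hI
  rw [hI] at hsq
  field_simp
  nlinarith [norm_nonneg (q m - a), hsq, hr]

lemma drift_diff {n : ℕ} (q : ℕ → EuclideanSpace ℝ (Fin n)) (w a b : EuclideanSpace ℝ (Fin n))
    (hw : ‖w‖ = 1)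
    (h1 : Filter.Tendsto (fun m => ‖q m‖) Filter.atTop Filter.atTop)
    (h2 : Filter.Tendsto (fun m => (‖q m‖⁻¹ • q m : EuclideanSpace ℝ (Fin n)))
      Filter.atTop (nhds w)) :
    Filter.Tendsto (fun m => ‖q m - a‖ - ‖q m - b‖) Filter.atTop
      (nhds ((inner ℝ (b - a) w : ℝ))) := by
  have h := (drift_aux q w a hw h1 h2).sub (drift_aux q w b hw h1 h2)
  have hval : -(inner ℝ a w : ℝ) - -(inner ℝ b w : ℝ) = (inner ℝ (b - a) w : ℝ) := by
    rw [inner_sub_left]; ring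
  rw [hval] at h
  refine h.congr fun m => by ring

/-- Uniqueness of the global direction. Let `X ⊆ ℝⁿ` be a `δ`-net
isometrically embedded (via `ι`) into `M`, whose image is a `δ̃`-net in `M`. Let
`γ` be a unit-speed minimizing geodesic ray with `γ 0 = ι p`, `p ∈ X`, which for both
unit vectors `w ∈ {u, v}` is a limit of minimizing geodesic segments from `ι p` to
points `ι (p_m)`, `p_m ∈ X`, drifting in direction `w` (`|p_m| → ∞`,
`p_m/|p_m| → w`). Then `u = v`. -/
theorem global_direction_unique {n : ℕ} {M : Type*} [MetricSpace M]
    (δ δt : ℝ) (hδ : 0 < δ) (hδt : 0 < δt)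
    (X : Set (EuclideanSpace ℝ (Fin n)))
    (hXnet : ∀ y : EuclideanSpace ℝ (Fin n), ∃ x ∈ X, dist y x < δ)
    (ι : EuclideanSpace ℝ (Fin n) → M)
    (hiso : ∀ x ∈ X, ∀ y ∈ X, dist (ι x) (ι y) = dist x y)
    (hnet : ∀ y : M, ∃ x ∈ X, dist y (ι x) < δt)
    (p : EuclideanSpace ℝ (Fin n)) (hp : p ∈ X)
    (u v : EuclideanSpace ℝ (Fin n)) (hu : ‖u‖ = 1) (hv : ‖v‖ = 1)
    (γ : ℝ → M) (hγ0 : γ 0 = ι p)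
    (hγ : ∀ t : ℝ, 0 ≤ t → dist (ι p) (γ t) = t)
    (hlim : ∀ w ∈ ({u, v} : Set (EuclideanSpace ℝ (Fin n))),
      ∃ (ps : ℕ → EuclideanSpace ℝ (Fin n)) (γs : ℕ → ℝ → M),
        (∀ m, ps m ∈ X) ∧
        Filter.Tendsto (fun m => ‖ps m‖) Filter.atTop Filter.atTop ∧
        Filter.Tendsto (fun m => (‖ps m‖⁻¹ • ps m : EuclideanSpace ℝ (Fin n)))
          Filter.atTop (nhds w) ∧
        (∀ m, ∀ t ∈ Set.Icc (0 : ℝ) (dist (ι p) (ι (ps m))),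
          dist (ι p) (γs m t) = t ∧
          dist (ι p) (γs m t) + dist (γs m t) (ι (ps m)) = dist (ι p) (ι (ps m))) ∧
        (∀ T : ℝ, 0 ≤ T →
          Filter.Tendsto (fun m => γs m T) Filter.atTop (nhds (γ T)))) :
    u = v := by
  -- Main estimate: for all T > 0, ‖u - v‖² T² ≤ 16 T δt + 4 δt².
  have main : ∀ T : ℝ, 0 < T → ‖u - v‖^2 * T^2 ≤ 16 * T * δt + 4 * δt^2 := by
    intro T hT
    obtain ⟨x, hx, hxd⟩ := hnet (γ T)
    set y := x - p with hy
    have hyn : ‖y‖ ≤ T + δt := by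
      have h1 : dist (ι x) (ι p) = dist x p := hiso x hx p hp
      have h2 : dist (ι x) (ι p) ≤ dist (ι x) (γ T) + dist (γ T) (ι p) := dist_triangle _ _ _
      have h3 : dist (γ T) (ι p) = T := by rw [dist_comm]; exact hγ T hT.le
      have h4 : dist (ι x) (γ T) = dist (γ T) (ι x) := dist_comm _ _
      have h5 : dist x p = ‖y‖ := by rw [hy, dist_eq_norm]
      linarith [hxd, h5 ▸ h1 ▸ h2]
    have hinner : ∀ w ∈ ({u, v} : Set (EuclideanSpace ℝ (Fin n))), ‖w‖ = 1 →
        T - δt ≤ (inner ℝ y w : ℝ) := by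
      intro w hw hwn
      obtain ⟨ps, γs, hpsX, hnorm, hdir, hmin, hconv⟩ := hlim w hw
      have hD : ∀ m, dist (ι p) (ι (ps m)) = ‖ps m - p‖ := fun m => by
        rw [hiso p hp (ps m) (hpsX m), dist_eq_norm, norm_sub_rev]
      have hfge : ∀ᶠ m in atTop,
          T - dist (γ T) (ι x) - dist (γ T) (γs m T) ≤ ‖ps m - p‖ - ‖ps m - x‖ := by
        filter_upwards [hnorm.eventually_ge_atTop (T + ‖p‖)] with m hm
        have hTD : T ≤ dist (ι p) (ι (ps m)) := by
          rw [hD]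
          have := norm_sub_norm_le (ps m) p
          linarith [abs_le.mp (abs_norm_sub_norm_le (ps m) p)]
        obtain ⟨hA, hB⟩ := hmin m T ⟨hT.le, hTD⟩
        have hC : dist (γs m T) (ι (ps m)) = dist (ι p) (ι (ps m)) - T := by linarith
        have hxps : dist (ι x) (ι (ps m)) ≤
            dist (γ T) (ι x) + dist (γ T) (γs m T) + (dist (ι p) (ι (ps m)) - T) := by
          calc dist (ι x) (ι (ps m)) ≤ dist (ι x) (γs m T) + dist (γs m T) (ι (ps m)) :=
                dist_triangle _ _ _
            _ ≤ (dist (ι x) (γ T) + dist (γ T) (γs m T)) + dist (γs m T) (ι (ps m)) := by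
                linarith [dist_triangle (ι x) (γ T) (γs m T)]
            _ = dist (γ T) (ι x) + dist (γ T) (γs m T) + (dist (ι p) (ι (ps m)) - T) := by
                rw [dist_comm (ι x) (γ T), hC]
        have hxn : dist (ι x) (ι (ps m)) = ‖ps m - x‖ := by
          rw [hiso x hx (ps m) (hpsX m), dist_eq_norm, norm_sub_rev]
        rw [hxn, hD m] at hxps
        linarith
      have hlimf := drift_diff ps w p x hwn hnorm hdir
      have hconvT : Tendsto (fun m => dist (γ T) (γs m T)) atTop (nhds 0) := by
        have hc : Tendsto (fun _ : ℕ => γ T) atTop (nhds (γ T)) := tendsto_const_nhds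
        have h := Tendsto.dist hc (hconv T hT.le)
        simpa using h
      have hlimg : Tendsto (fun m => T - dist (γ T) (ι x) - dist (γ T) (γs m T)) atTop
          (nhds (T - dist (γ T) (ι x) - 0)) :=
        tendsto_const_nhds.sub hconvT
      have hle := le_of_tendsto_of_tendsto hlimg hlimf hfge
      have hd : dist (γ T) (ι x) < δt := hxd
      have hxy : (inner ℝ (x - p) w : ℝ) = (inner ℝ y w : ℝ) := by rw [hy]
      rw [hxy] at hle
      linarith
    have hu1 : T - δt ≤ (inner ℝ y u : ℝ) := hinner u (Or.inl rfl) hu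
    have hv1 : T - δt ≤ (inner ℝ y v : ℝ) := hinner v (Or.inr rfl) hv
    have hTu : ‖T • u - y‖^2 ≤ 4 * T * δt + δt^2 := by
      have h := norm_sub_sq_real (T • u) y
      rw [norm_smul, Real.norm_eq_abs, abs_of_pos hT, hu, real_inner_smul_left] at h
      nlinarith [hyn, hu1, norm_nonneg y, real_inner_comm u y]
    have hTv : ‖T • v - y‖^2 ≤ 4 * T * δt + δt^2 := by
      have h := norm_sub_sq_real (T • v) y
      rw [norm_smul, Real.norm_eq_abs, abs_of_pos hT, hv, real_inner_smul_left] at h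
      nlinarith [hyn, hv1, norm_nonneg y, real_inner_comm v y]
    have htri : ‖T • u - T • v‖ ≤ ‖T • u - y‖ + ‖T • v - y‖ := by
      calc ‖T • u - T • v‖ = ‖(T • u - y) - (T • v - y)‖ := by
            rw [sub_sub_sub_cancel_right]
        _ ≤ ‖T • u - y‖ + ‖T • v - y‖ := norm_sub_le _ _
    have hTuv : ‖T • u - T • v‖ = T * ‖u - v‖ := by
      rw [← smul_sub, norm_smul, Real.norm_eq_abs, abs_of_pos hT]
    rw [hTuv] at htri
    have hsq := mul_self_le_mul_self (mul_nonneg hT.le (norm_nonneg (u - v))) htri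
    nlinarith [hTu, hTv, sq_nonneg (‖T • u - y‖ - ‖T • v - y‖), norm_nonneg (T • u - y),
      norm_nonneg (T • v - y)]
  -- Conclude: ‖u - v‖² ≤ ε for all ε > 0.
  have hsmall : ∀ ε : ℝ, 0 < ε → ‖u - v‖^2 ≤ ε := by
    intro ε hε
    set T := max 1 ((16 * δt + 4 * δt^2) / ε) with hTdef
    have hT1 : (1:ℝ) ≤ T := le_max_left _ _
    have hT0 : 0 < T := lt_of_lt_of_le one_pos hT1
    have hT2 : (16 * δt + 4 * δt^2) / ε ≤ T := le_max_right _ _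
    have hT3 : 16 * δt + 4 * δt^2 ≤ ε * T := by
      rw [div_le_iff₀ hε] at hT2; linarith
    have h := main T hT0
    have h2 : 16 * T * δt + 4 * δt^2 ≤ (16 * δt + 4 * δt^2) * T := by nlinarith [sq_nonneg δt]
    have h3 : (16 * δt + 4 * δt^2) * T ≤ (ε * T) * T :=
      mul_le_mul_of_nonneg_right hT3 hT0.le
    have h4 : ‖u - v‖^2 * T^2 ≤ ε * T^2 := by nlinarith
    exact le_of_mul_le_mul_right h4 (pow_pos hT0 2)
  have h0 : ‖u - v‖^2 ≤ 0 := by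
    by_contra h
    push_neg at h
    have := hsmall (‖u - v‖^2 / 2) (by linarith)
    linarith
  have : ‖u - v‖ = 0 := by nlinarith [norm_nonneg (u - v)]
  exact sub_eq_zero.mp (norm_eq_zero.mp this)
end

section
/- Key quantitative step of Lemma 4.1: let d be a metric, p, q points, T, δ̃ > 0 with T = 6δ̃/ε for some 0 < ε < 1, and suppose: (a) T − δ̃ < |p − q| < T + δ̃ (where |p − q| = d(p,q)); (b) there are points a (= γ_m(T)) and b (= γ(T)) with d(q, b) < δ̃, d(a, b) < δ̃, and a lies on a minimizing geodesic from p to a point p_m with d(p, a) = T and d(p, a) + d(a, p_m) = d(p, p_m); and (c) d(p, p_m) − d(q, p_m) < (1 − ε)(T + δ̃). Then d(p, q) < T − δ̃, contradicting (a). Formally: assumptions (a)–(c) are jointly inconsistent. -/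
/-- Key quantitative step of Lemma 4.1. In a metric space, let
`T = 6δ̃/ε` with `δ̃ > 0`, `0 < ε < 1`, and suppose
(a) `T - δ̃ < d(p,q) < T + δ̃`;
(b) `d(q,b) < δ̃`, `d(a,b) < δ̃`, `d(p,a) = T` and `d(p,a) + d(a,pm) = d(p,pm)`;
(c) `d(p,pm) - d(q,pm) < (1-ε)(T + δ̃)`.
Then we get a contradiction: (a)-(c) are jointly inconsistent. -/
theorem lemma41_quantitative_step {M : Type*} [MetricSpace M]
    (p q a b pm : M) (δt ε T : ℝ)
    (hδt : 0 < δt) (hε0 : 0 < ε) (hε1 : ε < 1) (hT : T = 6 * δt / ε)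
    (ha1 : T - δt < dist p q) (ha2 : dist p q < T + δt)
    (hb1 : dist q b < δt) (hb2 : dist a b < δt)
    (hb3 : dist p a = T) (hb4 : dist p a + dist a pm = dist p pm)
    (hc : dist p pm - dist q pm < (1 - ε) * (T + δt)) :
    False := by
  have hεT : ε * T = 6 * δt := by rw [hT]; field_simp [hε0.ne']
  have h1 : dist q pm ≤ dist q a + dist a pm := dist_triangle _ _ _
  have h2 : dist q a ≤ dist q b + dist b a := dist_triangle _ _ _
  have h3 : dist b a = dist a b := dist_comm _ _
  nlinarith [dist_nonneg (x := a) (y := pm)]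
end
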